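/- arXiv:2204.03910 — 3 statements merged into one kernel-verified Lean document; each statement's English description precedes it below -/
import Mathlib

section
/- Let Y be a set and f_n : Y → [0,1] (n ∈ ℕ) functions such that for every b ∈ Y, ∑_{n=0}^∞ |f_n(b) − f_{n+1}(b)| ≤ m. Then for all 0 ≤ r < s ≤ 1, for every k ≥ 1, every r_1,...,r_k ∈ [0,1] with ∑ r_i = 1, every b_1,...,b_k ∈ Y, and every N > m/(s−r) + 1, there do not exist indices j_1 < ... < j_N with ∑_i r_i f_{j_t}(b_i) ≤ r for all odd t and ∑_i r_i f_{j_t}(b_i) ≥ s for all even t. -/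
/-- DBSC (bounded pointwise total variation) sequences of [0,1]-valued functions
are randomly convergent: an alternation bound for all convex combinations of
evaluations. -/
theorem stmt_2 (Y : Type*) (m : ℝ) (f : ℕ → Y → ℝ)
    (hf : ∀ n b, f n b ∈ Set.Icc (0 : ℝ) 1)
    (hvar : ∀ b : Y, ∀ K : ℕ, ∑ n ∈ Finset.range K, |f n b - f (n + 1) b| ≤ m)
    (r s : ℝ) (hr : 0 ≤ r) (hrs : r < s) (hs : s ≤ 1)
    (k : ℕ) (hk : 1 ≤ k) (w : Fin k → ℝ) (hw : ∀ i, w i ∈ Set.Icc (0 : ℝ) 1)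
    (hwsum : ∑ i, w i = 1) (b : Fin k → Y)
    (N : ℕ) (hN : (N : ℝ) > m / (s - r) + 1) :
    ¬ ∃ j : Fin N → ℕ, StrictMono j ∧
      ∀ t : Fin N, (Even t.val → ∑ i, w i * f (j t) (b i) ≤ r) ∧
        (¬ Even t.val → s ≤ ∑ i, w i * f (j t) (b i)) := by
  rintro ⟨j, hj, halt⟩
  have hsr : 0 < s - r := by linarith
  have hm0 : 0 ≤ m := by simpa using hvar (b ⟨0, hk⟩) 0
  have hN1 : (1 : ℝ) < N := by
    have : 0 ≤ m / (s - r) := div_nonneg hm0 hsr.le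
    linarith
  have hN2 : 2 ≤ N := by
    have : 1 < N := by exact_mod_cast hN1
    omega
  set g : ℕ → ℝ := fun n => ∑ i, w i * f n (b i) with hg
  have hgdef : ∀ n, g n = ∑ i, w i * f n (b i) := fun _ => rfl
  -- Claim A: the convex combination also has total variation ≤ m.
  have hA : ∀ K, ∑ n ∈ Finset.range K, |g n - g (n + 1)| ≤ m := by
    intro K
    have h1 : ∀ n, |g n - g (n + 1)| ≤ ∑ i, w i * |f n (b i) - f (n + 1) (b i)| := by
      intro n
      have heq : g n - g (n + 1) = ∑ i, w i * (f n (b i) - f (n + 1) (b i)) := by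
        rw [hgdef, hgdef, ← Finset.sum_sub_distrib]
        exact Finset.sum_congr rfl fun i _ => by ring
      rw [heq]
      calc |∑ i, w i * (f n (b i) - f (n + 1) (b i))|
          ≤ ∑ i, |w i * (f n (b i) - f (n + 1) (b i))| := Finset.abs_sum_le_sum_abs _ _
        _ = ∑ i, w i * |f n (b i) - f (n + 1) (b i)| := by
            refine Finset.sum_congr rfl fun i _ => ?_
            rw [abs_mul, abs_of_nonneg (hw i).1]
    calc ∑ n ∈ Finset.range K, |g n - g (n + 1)|
        ≤ ∑ n ∈ Finset.range K, ∑ i, w i * |f n (b i) - f (n + 1) (b i)| :=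
          Finset.sum_le_sum fun n _ => h1 n
      _ = ∑ i, ∑ n ∈ Finset.range K, w i * |f n (b i) - f (n + 1) (b i)| := Finset.sum_comm
      _ = ∑ i, w i * ∑ n ∈ Finset.range K, |f n (b i) - f (n + 1) (b i)| := by
          simp [Finset.mul_sum]
      _ ≤ ∑ i, w i * m :=
          Finset.sum_le_sum fun i _ => mul_le_mul_of_nonneg_left (hvar (b i) K) (hw i).1
      _ = m := by rw [← Finset.sum_mul, hwsum, one_mul]
  -- Claim B: telescoping bound.
  have hB : ∀ a c : ℕ, a ≤ c → |g a - g c| ≤ ∑ n ∈ Finset.Ico a c, |g n - g (n + 1)| := by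
    intro a c hac
    induction c, hac using Nat.le_induction with
    | base => simp
    | succ c hac ih =>
      rw [Finset.sum_Ico_succ_top hac]
      have h3 : |g a - g (c + 1)| ≤ |g a - g c| + |g c - g (c + 1)| := abs_sub_le _ _ _
      linarith
  -- Claim C: consecutive alternation gap.
  have hC : ∀ t : ℕ, ∀ ht : t + 1 < N,
      s - r ≤ |g (j ⟨t, Nat.lt_of_succ_lt ht⟩) - g (j ⟨t + 1, ht⟩)| := by
    intro t ht
    have hodd : ¬ Even (t + 1) ↔ Even t := by simp [Nat.even_add_one]
    rcases Nat.even_or_odd t with he | ho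
    · have h1 := (halt ⟨t, Nat.lt_of_succ_lt ht⟩).1 he
      have h2 := (halt ⟨t + 1, ht⟩).2 (hodd.mpr he)
      rw [← hgdef] at h1 h2
      rw [abs_sub_comm]
      calc s - r ≤ g (j ⟨t + 1, ht⟩) - g (j ⟨t, Nat.lt_of_succ_lt ht⟩) := by
            simpa using sub_le_sub h2 h1
        _ ≤ |g (j ⟨t + 1, ht⟩) - g (j ⟨t, Nat.lt_of_succ_lt ht⟩)| := le_abs_self _
    · have hne : ¬ Even t := Nat.not_even_iff_odd.symm.mp ho
      have h1 := (halt ⟨t, Nat.lt_of_succ_lt ht⟩).2 hne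
      have h2 := (halt ⟨t + 1, ht⟩).1 (Nat.even_add_one.mpr hne)
      rw [← hgdef] at h1 h2
      calc s - r ≤ g (j ⟨t, Nat.lt_of_succ_lt ht⟩) - g (j ⟨t + 1, ht⟩) := by
            simpa using sub_le_sub h1 h2
        _ ≤ |g (j ⟨t, Nat.lt_of_succ_lt ht⟩) - g (j ⟨t + 1, ht⟩)| := le_abs_self _
  -- Claim D: accumulated variation grows linearly.
  have hD : ∀ T : ℕ, ∀ hT : T < N,
      (T : ℝ) * (s - r) ≤ ∑ n ∈ Finset.range (j ⟨T, hT⟩), |g n - g (n + 1)| := by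
    intro T
    induction T with
    | zero =>
      intro hT
      simpa using Finset.sum_nonneg fun n (_ : n ∈ Finset.range (j ⟨0, hT⟩)) =>
        abs_nonneg (g n - g (n + 1))
    | succ T ih =>
      intro hT
      have hT' : T < N := Nat.lt_of_succ_lt hT
      have hjlt : j ⟨T, hT'⟩ < j ⟨T + 1, hT⟩ := hj (by simp [Fin.lt_def])
      have key : ∑ n ∈ Finset.range (j ⟨T, hT'⟩), |g n - g (n + 1)| +
          ∑ n ∈ Finset.Ico (j ⟨T, hT'⟩) (j ⟨T + 1, hT⟩), |g n - g (n + 1)| =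
          ∑ n ∈ Finset.range (j ⟨T + 1, hT⟩), |g n - g (n + 1)| := by
        simp only [Finset.range_eq_Ico]
        exact Finset.sum_Ico_consecutive _ (Nat.zero_le _) hjlt.le
      have h1 := hC T hT
      have h2 := hB _ _ hjlt.le
      have h3 := ih hT'
      have hcast : ((T + 1 : ℕ) : ℝ) * (s - r) = (T : ℝ) * (s - r) + (s - r) := by
        push_cast; ring
      rw [hcast]
      linarith
  have hfin := hD (N - 1) (by omega)
  have hAA := hA (j ⟨N - 1, by omega⟩)
  have hcast : ((N - 1 : ℕ) : ℝ) = (N : ℝ) - 1 := by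
    have : 1 ≤ N := by omega
    push_cast [this]; ring
  have hlast : ((N : ℝ) - 1) * (s - r) ≤ m := by
    rw [← hcast]; linarith
  have : m < ((N : ℝ) - 1) * (s - r) := by
    have h4 : m / (s - r) < (N : ℝ) - 1 := by linarith
    calc m = m / (s - r) * (s - r) := by field_simp
      _ < ((N : ℝ) - 1) * (s - r) := by
        exact mul_lt_mul_of_pos_right h4 hsr
  linarith
end

section
/- Let J be a set, N ∈ ℕ, and f : ℕ → J → {0,1} such that no subset of ℕ of size N is shattered by the family {n ↦ f(n)(j) : j ∈ J}. Then there exist an infinite set H ⊆ ℕ and a set E ⊆ {1,...,N} such that for all i_1 < ... < i_N in H there is no j ∈ J with f(i_t)(j) = 1 for all t ∈ E and f(i_t)(j) = 0 for all t ∉ E. -/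
/-- `S ⊆ ℕ` is shattered by the family `{n ↦ f n j : j ∈ J}` if every Boolean
pattern on `S` is realized by some `j ∈ J`. -/
def SeqShatters {J : Type*} (f : ℕ → J → Bool) (S : Finset ℕ) : Prop :=
  ∀ g : ℕ → Bool, ∃ j : J, ∀ n ∈ S, f n j = g n

open Classical in
/-- Infinite Ramsey theorem for colorings of strictly increasing `N`-tuples. -/
theorem infinite_ramsey_tuples {C : Type*} [Finite C] :
    ∀ (N : ℕ) (c : (Fin N → ℕ) → C) (A : Set ℕ), A.Infinite →
      ∃ H : Set ℕ, H ⊆ A ∧ H.Infinite ∧ ∃ k : C,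
        ∀ i : Fin N → ℕ, StrictMono i → (∀ t, i t ∈ H) → c i = k := by
  intro N
  induction N with
  | zero =>
    intro c A hA
    refine ⟨A, le_refl _, hA, c (fun t => t.elim0), fun i _ _ => ?_⟩
    congr 1
    funext t
    exact t.elim0
  | succ N ih =>
    intro c A hA
    -- one-step extraction
    have key : ∀ B : {S : Set ℕ // S.Infinite},
        ∃ p : ℕ × {S : Set ℕ // S.Infinite}, p.1 ∈ B.1 ∧ p.2.1 ⊆ B.1 ∧
          (∀ x ∈ p.2.1, p.1 < x) ∧
          ∃ k : C, ∀ i : Fin N → ℕ, StrictMono i → (∀ t, i t ∈ p.2.1) →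
            c (Fin.cons p.1 i) = k := by
      rintro ⟨B, hB⟩
      obtain ⟨a, ha⟩ := hB.nonempty
      have hB' : (B \ Set.Iic a).Infinite := hB.diff (Set.finite_Iic a)
      obtain ⟨H', hH'sub, hH'inf, k, hk⟩ :=
        ih (fun i => c (Fin.cons a i)) (B \ Set.Iic a) hB'
      refine ⟨(a, ⟨H', hH'inf⟩), ha, fun x hx => (hH'sub hx).1, ?_, k, hk⟩
      intro x hx
      exact lt_of_not_ge fun h => (hH'sub hx).2 h
    choose g hg1 hg2 hg3 hg4 using key
    set chain : ℕ → {S : Set ℕ // S.Infinite} :=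
      fun n => Nat.rec ⟨A, hA⟩ (fun _ B => (g B).2) n with hchain
    have hchain_succ : ∀ n, chain (n + 1) = (g (chain n)).2 := fun n => rfl
    set a : ℕ → ℕ := fun n => (g (chain n)).1 with ha
    have hmem : ∀ n, a n ∈ (chain n).1 := fun n => hg1 (chain n)
    have hstep : ∀ n, (chain (n + 1)).1 ⊆ (chain n).1 := fun n => hg2 (chain n)
    have hanti : ∀ m n, m ≤ n → (chain n).1 ⊆ (chain m).1 := by
      intro m n h
      induction h with
      | refl => exact le_refl _
      | step h ih2 => exact fun x hx => ih2 (hstep _ hx)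
    have hlt : ∀ n, ∀ x ∈ (chain (n + 1)).1, a n < x := fun n => hg3 (chain n)
    have hamono : StrictMono a := by
      apply strictMono_nat_of_lt_succ
      intro n
      exact hlt n _ (hmem (n + 1))
    have hsubA : ∀ n, (chain n).1 ⊆ A := fun n => hanti 0 n (Nat.zero_le n)
    -- the color at step n
    set K : ℕ → C := fun n => Classical.choose (hg4 (chain n)) with hK
    have hKspec : ∀ n, ∀ i : Fin N → ℕ, StrictMono i →
        (∀ t, i t ∈ (chain (n + 1)).1) → c (Fin.cons (a n) i) = K n :=
      fun n => Classical.choose_spec (hg4 (chain n))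
    obtain ⟨k, hk⟩ := Finite.exists_infinite_fiber K
    have hkinf : (K ⁻¹' {k}).Infinite := Set.infinite_coe_iff.mp hk
    refine ⟨a '' (K ⁻¹' {k}), ?_, hkinf.image (hamono.injective.injOn), k, ?_⟩
    · rintro x ⟨n, _, rfl⟩
      exact hsubA n (hmem n)
    · intro i hi hiH
      have hm : ∀ t, ∃ m, K m = k ∧ a m = i t := by
        intro t
        obtain ⟨m, hm1, hm2⟩ := hiH t
        exact ⟨m, hm1, hm2⟩
      choose m hm1 hm2 using hm
      have hmmono : StrictMono m := by
        intro s t hst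
        have : a (m s) < a (m t) := by rw [hm2, hm2]; exact hi hst
        exact hamono.lt_iff_lt.mp this
      have h0 : i = Fin.cons (a (m 0)) (Fin.tail i) := by
        rw [hm2]; exact (Fin.cons_self_tail i).symm
      rw [h0]
      rw [← hm1 0]
      apply hKspec
      · intro s t hst
        exact hi (Fin.succ_lt_succ_iff.mpr hst)
      · intro t
        have h1 : m 0 < m t.succ := hmmono (Fin.succ_pos t)
        have h2 : Fin.tail i t = a (m t.succ) := (hm2 t.succ).symm
        rw [show Fin.tail i t = i t.succ from rfl, ← hm2 t.succ]
        exact hanti (m 0 + 1) (m t.succ) h1 (hmem (m t.succ))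

/-- A dependent sequence (no set of size `N` shattered) has, after passing to an
infinite set `H`, a uniformly omitted pattern `E`: the Ramsey extraction of a
Baire-1/2 (DBSC) convergent subsequence. -/
theorem stmt_10 {J : Type*} (f : ℕ → J → Bool) (N : ℕ)
    (hdep : ∀ S : Finset ℕ, S.card = N → ¬ SeqShatters f S) :
    ∃ H : Set ℕ, H.Infinite ∧ ∃ E : Set (Fin N),
      ∀ i : Fin N → ℕ, StrictMono i → (∀ t, i t ∈ H) →
        ¬ ∃ j : J, ∀ t : Fin N,
          (t ∈ E → f (i t) j = true) ∧ (t ∉ E → f (i t) j = false) := by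
  classical
  set c : (Fin N → ℕ) → Set (Fin N → Bool) :=
    fun i => {g | ∃ j, ∀ t, f (i t) j = g t} with hc
  obtain ⟨H, _, hHinf, k, hk⟩ :=
    infinite_ramsey_tuples N c Set.univ Set.infinite_univ
  haveI : Infinite H := hHinf.to_subtype
  -- an increasing N-tuple inside H
  set e : ℕ ↪o ℕ := Nat.orderEmbeddingOfSet H with he
  have hemem : ∀ n, e n ∈ H := by
    intro n
    have : e n ∈ Set.range e := ⟨n, rfl⟩
    rwa [Nat.orderEmbeddingOfSet_range] at this
  set i0 : Fin N → ℕ := fun t => e t with hi0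
  have hi0mono : StrictMono i0 := fun s t hst => e.strictMono (by exact_mod_cast hst)
  have hi0H : ∀ t, i0 t ∈ H := fun t => hemem t
  set S : Finset ℕ := Finset.image i0 Finset.univ with hS
  have hcard : S.card = N := by
    rw [hS, Finset.card_image_of_injective _ hi0mono.injective, Finset.card_univ,
      Fintype.card_fin]
  obtain ⟨g, hg⟩ := not_forall.mp (hdep S hcard)
  push_neg at hg
  -- the omitted pattern
  have hp : (fun t => g (i0 t)) ∉ k := by
    rw [← hk i0 hi0mono hi0H]
    rintro ⟨j, hj⟩
    obtain ⟨n, hn, hne⟩ := hg j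
    obtain ⟨t, _, rfl⟩ := Finset.mem_image.mp hn
    exact hne (hj t)
  refine ⟨H, hHinf, {t | g (i0 t) = true}, ?_⟩
  rintro i hi hiH ⟨j, hj⟩
  apply hp
  rw [← hk i hi hiH]
  refine ⟨j, fun t => ?_⟩
  by_cases ht : g (i0 t) = true
  · rw [(hj t).1 ht]; exact ht.symm
  · rw [(hj t).2 ht]
    rw [Bool.not_eq_true] at ht
    exact ht.symm
end

section
/- Let Y be a set and f_n : Y → {0,1} functions (n ∈ ℕ) such that for every b ∈ Y the sequence (f_n(b)) changes value at most m times, i.e., |{n : f_n(b) ≠ f_{n+1}(b)}| ≤ m. Then for every k ≥ 1, all r_1,...,r_k ∈ [0,1] with ∑ r_i = 1, all b_1,...,b_k ∈ Y, all 0 ≤ r < s ≤ 1, and all N > m/(s−r) + 1, there are no indices j_1 < ... < j_N such that ∑_i r_i f_{j_t}(b_i) ≤ r for odd t and ∑_i r_i f_{j_t}(b_i) ≥ s for even t. -/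
/-!
Each sequence `n ↦ f n b` changes value at most `m` times, so `∑ₙ |f (n+1) b - f n b| ≤ m`; by the
triangle inequality the convex combination `g n = ∑ᵢ wᵢ f n (bᵢ)` inherits this variation
bound. An alternating subsequence `g (j 0) ≤ r`, `g (j 1) ≥ s`, … of length `T + 1` makes `T`
jumps of size at least `s - r`, and these jumps are dominated by the total variation, so
`T (s - r) ≤ m`, which contradicts `N = T + 1 > m / (s - r) + 1`.
-/

open Finset

theorem abs_sub_le_sum_Ico_abs_sub (g : ℕ → ℝ) {a c : ℕ} (hac : a ≤ c) :
    |g c - g a| ≤ ∑ n ∈ Ico a c, |g (n + 1) - g n| := by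
  rw [← sum_Ico_sub g hac]
  exact abs_sum_le_sum_abs _ _

theorem sum_abs_sub_comp_le_sum_Ico (g : ℕ → ℝ) {T : ℕ} (j : Fin (T + 1) → ℕ)
    (hj : Monotone j) :
    ∑ t : Fin T, |g (j t.succ) - g (j t.castSucc)|
      ≤ ∑ n ∈ Ico (j 0) (j (Fin.last T)), |g (n + 1) - g n| := by
  induction T with
  | zero => simp
  | succ T ih =>
    have hprev := ih (j ∘ Fin.castSucc) (hj.comp Fin.strictMono_castSucc.monotone)
    have hlast := abs_sub_le_sum_Ico_abs_sub g
      (hj (Fin.castSucc_le_succ (Fin.last T)))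
    simp only [Function.comp_apply, Fin.castSucc_zero] at hprev
    rw [Fin.sum_univ_castSucc, ← Fin.succ_last, ← sum_Ico_consecutive _ (hj (Fin.zero_le _))
      (hj (Fin.castSucc_le_succ (Fin.last T)))]
    simp only [Fin.succ_castSucc]
    exact add_le_add hprev hlast

theorem sum_abs_sub_le_ncard_of_zero_or_one {x : ℕ → ℝ} (hx : ∀ n, x n = 0 ∨ x n = 1)
    (hfin : {n | x n ≠ x (n + 1)}.Finite) (S : Finset ℕ) :
    ∑ n ∈ S, |x (n + 1) - x n| ≤ {n | x n ≠ x (n + 1)}.ncard := by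
  have hjump : ∀ n, |x (n + 1) - x n| = if x n ≠ x (n + 1) then 1 else 0 := by
    intro n
    rcases hx n with h | h <;> rcases hx (n + 1) with h' | h' <;> simp [h, h']
  rw [sum_congr rfl fun n _ => hjump n, ← sum_filter, sum_const, nsmul_one,
    Set.ncard_eq_toFinset_card _ hfin, Nat.cast_le]
  exact card_le_card fun n hn => by simpa using (mem_filter.1 hn).2

theorem sum_abs_sub_weighted_sum_le {ι : Type*} [Fintype ι] {w : ι → ℝ} (hw : ∀ i, 0 ≤ w i)
    (x : ι → ℕ → ℝ) (S : Finset ℕ) :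
    ∑ n ∈ S, |∑ i, w i * x i (n + 1) - ∑ i, w i * x i n|
      ≤ ∑ i, w i * ∑ n ∈ S, |x i (n + 1) - x i n| := by
  calc ∑ n ∈ S, |∑ i, w i * x i (n + 1) - ∑ i, w i * x i n|
      ≤ ∑ n ∈ S, ∑ i, w i * |x i (n + 1) - x i n| := by
        refine sum_le_sum fun n _ => ?_
        rw [← sum_sub_distrib]
        refine (abs_sum_le_sum_abs _ _).trans_eq (sum_congr rfl fun i _ => ?_)
        rw [← mul_sub, abs_mul, abs_of_nonneg (hw i)]
    _ = ∑ i, w i * ∑ n ∈ S, |x i (n + 1) - x i n| := by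
        rw [sum_comm]
        simp only [mul_sum]

theorem mul_sub_le_of_alternating {g : ℕ → ℝ} {V : ℝ}
    (hV : ∀ a c, ∑ n ∈ Ico a c, |g (n + 1) - g n| ≤ V) {r s : ℝ} {T : ℕ}
    (j : Fin (T + 1) → ℕ) (hj : Monotone j)
    (halt : ∀ t : Fin (T + 1), (Even t.val → g (j t) ≤ r) ∧ (¬ Even t.val → s ≤ g (j t))) :
    T * (s - r) ≤ V := by
  have hjump : ∀ t : Fin T, s - r ≤ |g (j t.succ) - g (j t.castSucc)| := by
    intro t
    have hcur := halt t.castSucc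
    have hnext := halt t.succ
    simp only [Fin.val_succ, Fin.val_castSucc, Nat.even_add_one] at hcur hnext
    by_cases ht : Even t.val
    · exact le_abs.2 (Or.inl (by linarith [hcur.1 ht, hnext.2 (not_not.2 ht)]))
    · exact le_abs.2 (Or.inr (by linarith [hcur.2 ht, hnext.1 ht]))
  calc (T : ℝ) * (s - r) = ∑ _t : Fin T, (s - r) := by
        rw [sum_const, card_univ, Fintype.card_fin, nsmul_eq_mul]
    _ ≤ ∑ t : Fin T, |g (j t.succ) - g (j t.castSucc)| := sum_le_sum fun t _ => hjump t
    _ ≤ ∑ n ∈ Ico (j 0) (j (Fin.last T)), |g (n + 1) - g n| :=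
        sum_abs_sub_comp_le_sum_Ico g j hj
    _ ≤ V := hV _ _

theorem stmt_14_general {Y : Type*} (m : ℕ) (f : ℕ → Y → ℝ)
    (hf01 : ∀ n b, f n b = 0 ∨ f n b = 1)
    (hchange : ∀ b : Y, {n : ℕ | f n b ≠ f (n + 1) b}.Finite ∧
      {n : ℕ | f n b ≠ f (n + 1) b}.ncard ≤ m)
    (k : ℕ) (w : Fin k → ℝ) (hw : ∀ i, w i ∈ Set.Icc (0 : ℝ) 1)
    (hwsum : ∑ i, w i = 1) (b : Fin k → Y)
    (r s : ℝ) (hrs : r < s)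
    (N : ℕ) (hN : (N : ℝ) > (m : ℝ) / (s - r) + 1) :
    ¬ ∃ j : Fin N → ℕ, StrictMono j ∧
      ∀ t : Fin N, (Even t.val → ∑ i, w i * f (j t) (b i) ≤ r) ∧
        (¬ Even t.val → s ≤ ∑ i, w i * f (j t) (b i)) := by
  rintro ⟨j, hj, halt⟩
  have hsr : 0 < s - r := sub_pos.2 hrs
  have hvar : ∀ a c, ∑ n ∈ Ico a c,
      |∑ i, w i * f (n + 1) (b i) - ∑ i, w i * f n (b i)| ≤ m := fun a c =>
    calc _ ≤ ∑ i, w i * ∑ n ∈ Ico a c, |f (n + 1) (b i) - f n (b i)| :=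
          sum_abs_sub_weighted_sum_le (fun i => (hw i).1) (fun i n => f n (b i)) _
      _ ≤ ∑ i, w i * m := sum_le_sum fun i _ => mul_le_mul_of_nonneg_left
          ((sum_abs_sub_le_ncard_of_zero_or_one (fun n => hf01 n (b i)) (hchange (b i)).1 _).trans
            (by exact_mod_cast (hchange (b i)).2)) (hw i).1
      _ = m := by rw [← sum_mul, hwsum, one_mul]
  obtain ⟨T, rfl⟩ : ∃ T, N = T + 1 :=
    Nat.exists_eq_succ_of_ne_zero (by rintro rfl; linarith [div_nonneg m.cast_nonneg hsr.le])
  have hbound := mul_sub_le_of_alternating (g := fun n => ∑ i, w i * f n (b i)) hvar j hj.monotone halt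
  push_cast at hN
  linarith [(div_lt_iff₀ hsr).1 (by linarith : (m : ℝ) / (s - r) < T)]

/-- {0,1}-valued version of Fact 3.7: a sequence of 0-1 valued functions each of
whose value sequences changes at most `m` times is randomly convergent, i.e.
satisfies the alternation bound for all convex combinations of evaluations. -/
theorem stmt_14 {Y : Type*} (m : ℕ) (f : ℕ → Y → ℝ)
    (hf01 : ∀ n b, f n b = 0 ∨ f n b = 1)
    (hchange : ∀ b : Y, {n : ℕ | f n b ≠ f (n + 1) b}.Finite ∧
      {n : ℕ | f n b ≠ f (n + 1) b}.ncard ≤ m)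
    (k : ℕ) (hk : 1 ≤ k) (w : Fin k → ℝ) (hw : ∀ i, w i ∈ Set.Icc (0 : ℝ) 1)
    (hwsum : ∑ i, w i = 1) (b : Fin k → Y)
    (r s : ℝ) (hr : 0 ≤ r) (hrs : r < s) (hs : s ≤ 1)
    (N : ℕ) (hN : (N : ℝ) > (m : ℝ) / (s - r) + 1) :
    ¬ ∃ j : Fin N → ℕ, StrictMono j ∧
      ∀ t : Fin N, (Even t.val → ∑ i, w i * f (j t) (b i) ≤ r) ∧
        (¬ Even t.val → s ≤ ∑ i, w i * f (j t) (b i)) :=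
  stmt_14_general m f hf01 hchange k w hw hwsum b r s hrs N hN
end
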